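/- The automaton C is unambiguous: for every input tree there is at most one accepting run. The only nondeterministic choice (at a ∨-labelled node in state P or P_∨, between transitions assigning P or N to the right child) is forced, because by the partition lemma each right subtree is accepted from at most one of the states P, N. -/

import Mathlib

/-- The alphabet {a, b, ∨, ¬}. -/
inductive A4 | la | lb | lor | lneg
deriving DecidableEq

instance : TopologicalSpace A4 := ⊥
instance : DiscreteTopology A4 := ⟨rfl⟩

/-- Infinite binary trees over {a, b, ∨, ¬}. -/
abbrev Tree4 := List (Fin 2) → A4

/-- The length-`n` prefix of a branch. -/
def pre (β : ℕ → Fin 2) (n : ℕ) : List (Fin 2) := List.ofFn (fun i : Fin n => β i)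

/-- `r` occurs infinitely often in the sequence `g`. -/
def InfOften (g : ℕ → ℕ) (r : ℕ) : Prop := ∀ m, ∃ n ≥ m, g n = r

/-- Parity condition: the maximal value occurring infinitely often is even. -/
def ParityOk (g : ℕ → ℕ) : Prop :=
  ∃ r, Even r ∧ InfOften g r ∧ ∀ r', InfOften g r' → r' ≤ r

/-- States of the unambiguous automaton `C` (including the states of `A_G` and `A_L`). -/
inductive QC
  | P | N | Pv | Nv | Tv | TS | Top
  | g1 | g2 | top2 | bot1 | l1 | l0 | top0
deriving DecidableEq

def rankC : QC → ℕ
  | .P => 1 | .N => 1 | .Pv => 1 | .TS => 1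
  | .Nv => 0 | .Tv => 0 | .Top => 0
  | .g1 => 1 | .g2 => 2 | .top2 => 2 | .bot1 => 1 | .l1 => 1 | .l0 => 0 | .top0 => 0

/-- Transition relation of `C`. -/
def deltaC : QC → A4 → QC → QC → Prop := fun q a q1 q2 =>
  match q, a with
  -- the formula layer
  | .P, .lor | .Pv, .lor => (q1 = .Tv ∧ q2 = .P) ∨ (q1 = .Pv ∧ q2 = .N)
  | .N, .lor | .Nv, .lor => q1 = .Nv ∧ q2 = .N
  | .Tv, .lor | .TS, .lor => q1 = .Tv ∧ q2 = .TS
  | .P, .lneg => q1 = .Top ∧ q2 = .N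
  | .N, .lneg => q1 = .Top ∧ q2 = .P
  | .TS, .lneg => q1 = .Top ∧ q2 = .TS
  | .TS, .la | .TS, .lb => q1 = .Top ∧ q2 = .Top
  | .Top, _ => q1 = .Top ∧ q2 = .Top
  -- on a or b, state P acts as g₁ of A_G, state N acts as l₁ of A_L
  | .P, .la => (q1 = .g2 ∧ q2 = .top2) ∨ (q1 = .l1 ∧ q2 = .g1)
  | .P, .lb => q1 = .bot1 ∧ q2 = .bot1
  | .N, .la => q1 = .l1 ∧ q2 = .l0
  | .N, .lb => q1 = .top0 ∧ q2 = .top0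
  -- the A_G component (letters other than a are treated like b)
  | .g1, .la | .g2, .la => (q1 = .g2 ∧ q2 = .top2) ∨ (q1 = .l1 ∧ q2 = .g1)
  | .g1, _ | .g2, _ => q1 = .bot1 ∧ q2 = .bot1
  -- the A_L component
  | .l1, .la | .l0, .la => q1 = .l1 ∧ q2 = .l0
  | .l1, _ | .l0, _ => q1 = .top0 ∧ q2 = .top0
  | .top2, _ => q1 = .top2 ∧ q2 = .top2
  | .bot1, _ => q1 = .bot1 ∧ q2 = .bot1
  | .top0, _ => q1 = .top0 ∧ q2 = .top0
  -- no transitions in the remaining cases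
  | _, _ => False

/-- A run of `C` on `t` starting in state `q0`. -/
def IsRunC (t : Tree4) (q0 : QC) (ρ : List (Fin 2) → QC) : Prop :=
  ρ [] = q0 ∧ ∀ v : List (Fin 2), deltaC (ρ v) (t v) (ρ (v ++ [0])) (ρ (v ++ [1]))

/-- An accepting run: the parity condition holds on every branch. -/
def AccRunC (t : Tree4) (q0 : QC) (ρ : List (Fin 2) → QC) : Prop :=
  IsRunC t q0 ρ ∧ ∀ β : ℕ → Fin 2, ParityOk (fun n => rankC (ρ (pre β n)))

/-- `t` is accepted by `C` started in state `q0`. -/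
def AcceptsFrom (q0 : QC) (t : Tree4) : Prop := ∃ ρ, AccRunC t q0 ρ

/-!
Two runs on the same tree that agree at a node can only disagree at its children through a
nondeterministic transition, and there the children carry an opposed pair of states: `P`
against `N`, or `g2` (of `A_G`) against `l1` (of `A_L`). No tree is accepted from both states of
an opposed pair. Indeed, following children at which the two runs stay opposed gives a branch on
which the second run has priorities `≤ 1` and at every node one of the runs has priority `1`; so
either the second run sees `1` infinitely often and nothing larger, or from some point on the
first run sees only `1`. For the formula pairs such a branch never has to enter `A_G × A_L`,
because reaching an opposed pair there is already contradictory.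
-/

lemma infOften_comp_add_iff (g : ℕ → ℕ) (k r : ℕ) :
    InfOften (fun n => g (n + k)) r ↔ InfOften g r := by
  constructor
  · intro h m
    obtain ⟨n, hn, he⟩ := h m
    exact ⟨n + k, by omega, he⟩
  · intro h m
    obtain ⟨n, hn, he⟩ := h (m + k)
    exact ⟨n - k, by omega, by simpa [Nat.sub_add_cancel (show k ≤ n by omega)]⟩

lemma ParityOk.comp_add {g : ℕ → ℕ} (h : ParityOk g) (k : ℕ) :
    ParityOk (fun n => g (n + k)) := by
  obtain ⟨r, hr, hi, hmax⟩ := h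
  simp only [ParityOk, infOften_comp_add_iff]
  exact ⟨r, hr, hi, hmax⟩

lemma parityOk_const_iff (c : ℕ) : ParityOk (fun _ => c) ↔ Even c := by
  have hinf : ∀ r, InfOften (fun _ => c) r ↔ r = c := fun r =>
    ⟨fun h => ((h 0).choose_spec.2).symm, fun h m => ⟨m, le_rfl, h.symm⟩⟩
  simp only [ParityOk, hinf]
  exact ⟨fun ⟨r, hr, hrc, _⟩ => hrc ▸ hr, fun hc => ⟨c, hc, rfl, fun _ => le_of_eq⟩⟩

lemma not_parityOk_and_parityOk {f g : ℕ → ℕ} (hfg : ∀ n, g n ≤ 1 ∧ (f n = 1 ∨ g n = 1)) :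
    ¬ (ParityOk f ∧ ParityOk g) := by
  rintro ⟨⟨r, hr, hri, -⟩, ⟨s, hs, hsi, hsmax⟩⟩
  have hs0 : s = 0 := by
    obtain ⟨n, -, rfl⟩ := hsi 0
    obtain ⟨k, hk⟩ := hs
    have := (hfg n).1
    omega
  obtain ⟨M, hM⟩ : ∃ M, ∀ n ≥ M, g n ≠ 1 := by
    by_contra! h
    exact absurd (hsmax 1 h) (by omega)
  obtain ⟨n, hn, rfl⟩ := hri M
  have : f n = 1 := (hfg n).2.resolve_right (hM n hn)
  rw [this] at hr
  exact Nat.not_even_one hr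

lemma pre_succ (β : ℕ → Fin 2) (n : ℕ) : pre β (n + 1) = pre β n ++ [β n] := by
  simp only [pre, List.ofFn_succ', List.concat_eq_append, Fin.val_castSucc, Fin.val_last]

lemma pre_succ_eq_cons (d : Fin 2) (β : ℕ → Fin 2) (n : ℕ) :
    pre (fun | 0 => d | k + 1 => β k) (n + 1) = d :: pre β n := by
  simp [pre, List.ofFn_succ]

lemma exists_forall_pre_of_forall_exists {S : List (Fin 2) → Prop} (h0 : S [])
    (hstep : ∀ v, S v → ∃ d : Fin 2, S (v ++ [d])) : ∃ β : ℕ → Fin 2, ∀ n, S (pre β n) := by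
  choose next hnext using hstep
  let u : ℕ → {v // S v} := fun n =>
    Nat.rec ⟨[], h0⟩ (fun _ w => ⟨w.1 ++ [next w.1 w.2], hnext w.1 w.2⟩) n
  refine ⟨fun n => next (u n).1 (u n).2, fun n => ?_⟩
  suffices pre _ n = (u n).1 from this ▸ (u n).2
  induction n with
  | zero => rfl
  | succ n ih => rw [pre_succ, ih]

lemma AccRunC.subtree_cons {t : Tree4} {q : QC} {ρ : List (Fin 2) → QC} (h : AccRunC t q ρ)
    (d : Fin 2) : AccRunC (fun w => t (d :: w)) (ρ [d]) (fun w => ρ (d :: w)) := by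
  refine ⟨⟨rfl, fun w => h.1.2 (d :: w)⟩, fun β => ?_⟩
  have := (h.2 fun | 0 => d | k + 1 => β k).comp_add 1
  simpa only [pre_succ_eq_cons] using this

lemma AccRunC.subtree {t : Tree4} {q : QC} {ρ : List (Fin 2) → QC} (h : AccRunC t q ρ)
    (v : List (Fin 2)) : AccRunC (fun w => t (v ++ w)) (ρ v) (fun w => ρ (v ++ w)) := by
  induction v generalizing t q ρ with
  | nil => rw [h.1.1]; exact h
  | cons d v ih => exact ih (h.subtree_cons d)

lemma IsRunC.eq_bot1 {t : Tree4} {ρ : List (Fin 2) → QC} (h : IsRunC t .bot1 ρ)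
    (w : List (Fin 2)) : ρ w = .bot1 := by
  induction w using List.reverseRecOn with
  | nil => exact h.1
  | append_singleton w d ih =>
    have hδ := h.2 w
    rw [ih] at hδ
    fin_cases d
    exacts [hδ.1, hδ.2]

lemma AccRunC.ne_bot1 {t : Tree4} {q : QC} {ρ : List (Fin 2) → QC} (h : AccRunC t q ρ)
    (v : List (Fin 2)) : ρ v ≠ .bot1 := by
  intro hv
  obtain ⟨hrun, hpar⟩ := h.subtree v
  rw [hv] at hrun
  have := hpar fun _ => 0
  simp only [hrun.eq_bot1, rankC, parityOk_const_iff] at this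
  exact Nat.not_even_one this

lemma AccRunC.false_of_invariant {t : Tree4} {q₁ q₂ : QC} {ρ₁ ρ₂ : List (Fin 2) → QC}
    (h₁ : AccRunC t q₁ ρ₁) (h₂ : AccRunC t q₂ ρ₂) (R : QC → QC → Prop)
    (hR : ∀ p q, R p q → rankC q ≤ 1 ∧ (rankC p = 1 ∨ rankC q = 1)) (h₀ : R q₁ q₂)
    (hstep : ∀ v, R (ρ₁ v) (ρ₂ v) → ∃ d, R (ρ₁ (v ++ [d])) (ρ₂ (v ++ [d]))) : False := by
  obtain ⟨β, hβ⟩ := exists_forall_pre_of_forall_exists (S := fun v => R (ρ₁ v) (ρ₂ v))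
    (by rwa [h₁.1.1, h₂.1.1]) hstep
  exact not_parityOk_and_parityOk (fun n => hR _ _ (hβ n)) ⟨h₁.2 β, h₂.2 β⟩

namespace QC

inductive FormulaOpposed : QC → QC → Prop
  | P_N : FormulaOpposed P N
  | N_P : FormulaOpposed N P
  | Pv_Nv : FormulaOpposed Pv Nv
  | Nv_Pv : FormulaOpposed Nv Pv

/-- The first state belongs to `A_G`, the second to `A_L`. -/
inductive GLOpposed : QC → QC → Prop
  | g2_l1 : GLOpposed g2 l1
  | g1_l0 : GLOpposed g1 l0

def Opposed (p q : QC) : Prop := FormulaOpposed p q ∨ GLOpposed p q ∨ GLOpposed q p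

lemma FormulaOpposed.rankC_le_one_and_eq_one {p q : QC} (h : FormulaOpposed p q) :
    rankC q ≤ 1 ∧ (rankC p = 1 ∨ rankC q = 1) := by
  cases h <;> decide

lemma GLOpposed.rankC_le_one_and_eq_one {p q : QC} (h : GLOpposed p q) :
    rankC q ≤ 1 ∧ (rankC p = 1 ∨ rankC q = 1) := by
  cases h <;> decide

lemma GLOpposed.deltaC_step {p q p₀ p₁ q₀ q₁ : QC} {a : A4} (h : GLOpposed p q)
    (hp : deltaC p a p₀ p₁) (hq : deltaC q a q₀ q₁) (hp₀ : p₀ ≠ bot1) :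
    GLOpposed p₀ q₀ ∨ GLOpposed p₁ q₁ := by
  cases h <;> cases a <;> simp only [deltaC] at hp hq <;> obtain ⟨rfl, rfl⟩ := hq <;>
    first
    | exact absurd hp.1 hp₀
    | rcases hp with ⟨rfl, rfl⟩ | ⟨rfl, rfl⟩ <;>
        simp only [GLOpposed.g2_l1, GLOpposed.g1_l0, or_true, true_or]

lemma FormulaOpposed.deltaC_step {p q p₀ p₁ q₀ q₁ : QC} {a : A4} (h : FormulaOpposed p q)
    (hp : deltaC p a p₀ p₁) (hq : deltaC q a q₀ q₁) (hp₀ : p₀ ≠ bot1) (hq₀ : q₀ ≠ bot1) :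
    Opposed p₀ q₀ ∨ Opposed p₁ q₁ := by
  cases h <;> cases a <;> simp only [deltaC] at hp hq <;> casesm* _ ∨ _, _ ∧ _ <;> subst_vars <;>
    simp_all [Opposed, FormulaOpposed.P_N, FormulaOpposed.N_P, FormulaOpposed.Pv_Nv,
      FormulaOpposed.Nv_Pv, GLOpposed.g2_l1, GLOpposed.g1_l0]

lemma deltaC_eq_or_opposed {q p₀ p₁ p₀' p₁' : QC} {a : A4} (h : deltaC q a p₀ p₁)
    (h' : deltaC q a p₀' p₁') : (p₀ = p₀' ∧ p₁ = p₁') ∨ Opposed p₀ p₀' ∨ Opposed p₁ p₁' := by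
  cases q <;> cases a <;> simp only [deltaC] at h h' <;> casesm* _ ∨ _, _ ∧ _ <;> subst_vars <;>
    simp [Opposed, FormulaOpposed.P_N, FormulaOpposed.N_P, GLOpposed.g2_l1]

lemma GLOpposed.not_acceptsFrom {p q : QC} {t : Tree4} (h : GLOpposed p q)
    (hp : AcceptsFrom p t) (hq : AcceptsFrom q t) : False := by
  obtain ⟨ρ₁, h₁⟩ := hp
  obtain ⟨ρ₂, h₂⟩ := hq
  refine h₁.false_of_invariant h₂ GLOpposed (fun _ _ => GLOpposed.rankC_le_one_and_eq_one) h
    fun v hv => ?_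
  exact Fin.exists_fin_two.2 (hv.deltaC_step (h₁.1.2 v) (h₂.1.2 v) (h₁.ne_bot1 _))

lemma FormulaOpposed.not_acceptsFrom {p q : QC} {t : Tree4} (h : FormulaOpposed p q)
    (hp : AcceptsFrom p t) (hq : AcceptsFrom q t) : False := by
  obtain ⟨ρ₁, h₁⟩ := hp
  obtain ⟨ρ₂, h₂⟩ := hq
  refine h₁.false_of_invariant h₂ FormulaOpposed
    (fun _ _ => FormulaOpposed.rankC_le_one_and_eq_one) h fun v hv => ?_
  have hchild : ∀ w, Opposed (ρ₁ w) (ρ₂ w) → FormulaOpposed (ρ₁ w) (ρ₂ w) := by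
    rintro w (hF | hG | hG)
    · exact hF
    · exact (hG.not_acceptsFrom ⟨_, h₁.subtree w⟩ ⟨_, h₂.subtree w⟩).elim
    · exact (hG.not_acceptsFrom ⟨_, h₂.subtree w⟩ ⟨_, h₁.subtree w⟩).elim
  rcases hv.deltaC_step (h₁.1.2 v) (h₂.1.2 v) (h₁.ne_bot1 _) (h₂.ne_bot1 _) with hl | hr
  exacts [⟨0, hchild _ hl⟩, ⟨1, hchild _ hr⟩]

lemma Opposed.not_acceptsFrom {p q : QC} {t : Tree4} (h : Opposed p q)
    (hp : AcceptsFrom p t) (hq : AcceptsFrom q t) : False := by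
  rcases h with h | h | h
  exacts [h.not_acceptsFrom hp hq, h.not_acceptsFrom hp hq, h.not_acceptsFrom hq hp]

end QC

/-- The automaton `C` is unambiguous: every tree has at most one accepting run. -/
theorem C_unambiguous (t : Tree4) (ρ₁ ρ₂ : List (Fin 2) → QC)
    (h1 : AccRunC t QC.P ρ₁) (h2 : AccRunC t QC.P ρ₂) : ρ₁ = ρ₂ := by
  funext v
  induction v using List.reverseRecOn with
  | nil => rw [h1.1.1, h2.1.1]
  | append_singleton w d ih =>
    have hδ₂ := h2.1.2 w
    rw [← ih] at hδ₂
    rcases QC.deltaC_eq_or_opposed (h1.1.2 w) hδ₂ with ⟨h₀, h₁⟩ | hopp | hopp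
    · fin_cases d
      exacts [h₀, h₁]
    · exact (hopp.not_acceptsFrom ⟨_, h1.subtree _⟩ ⟨_, h2.subtree _⟩).elim
    · exact (hopp.not_acceptsFrom ⟨_, h1.subtree _⟩ ⟨_, h2.subtree _⟩).elim
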